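/- arXiv:1604.07635 — 5 statements merged into one kernel-verified Lean document; each statement's English description precedes it below -/
import Mathlib

section
/- Let F : ℝ⁶ → ℝ⁶ be the reaction vector field of the reduced coagulation model. A point u* = (T*, U₅*, U₈*, U₉*, U₁₀*, U₁₁*) satisfies F(u*) = 0 if and only if U₅* = φ₅(T*), U₈* = φ₈(T*), U₉* = φ₉(T*), U₁₀* = φ₁₀(T*), U₁₁* = φ₁₁(T*), and P(T*) = 0. In particular, stationary points of the kinetic system du/dt = F(u) are in one-to-one correspondence with the roots T* of the quartic polynomial P. -/
open Set

/-!
Five of the six stationarity equations are linear in one unknown each and form a cascade: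
`U₅, U₈, U₁₁` are proportional to `T`, then `U₉` to `U₁₁`, and `U₁₀` is determined by `U₈, U₉`.
Solving it expresses every `Uᵢ` as `φᵢ(T)`, and substituting into the remaining equation
turns `F₁ = 0` into `P(T) = 0`. The stationary point over a root `T` is therefore
`(T, φ₅ T, φ₈ T, φ₉ T, φ₁₀ T, φ₁₁ T)`, which inverts the projection `u ↦ T`.
-/

section Field

variable {K : Type*} [Field K] {a b x y : K}

lemma sub_mul_eq_zero_iff_eq_div (hb : b ≠ 0) : a - b * y = 0 ↔ y = a / b := by
  rw [sub_eq_zero, eq_div_iff hb, mul_comm, eq_comm]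

lemma mul_sub_mul_eq_zero_iff_eq_div_mul (hb : b ≠ 0) : a * x - b * y = 0 ↔ y = a / b * x := by
  rw [sub_mul_eq_zero_iff_eq_div hb, div_mul_eq_mul_div]

end Field

/-- Stationary points of the reduced coagulation model.
`F u = 0` iff the components satisfy `Uᵢ = φᵢ(T)` and `P(T) = 0`; in particular the
projection `u ↦ T = u 0` is a bijection between stationary points of the kinetic
system and the roots of the quartic polynomial `P`. -/
theorem stmt_0
    (k2 kb2 k5 k8 k9 k10 kb10 k11 k89 k510
     h2 h5 h8 h9 h10 h11 h89 h510 T0 : ℝ)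
    (hpos : 0 < k2 ∧ 0 < kb2 ∧ 0 < k5 ∧ 0 < k8 ∧ 0 < k9 ∧ 0 < k10 ∧ 0 < kb10 ∧
            0 < k11 ∧ 0 < k89 ∧ 0 < k510 ∧ 0 < h2 ∧ 0 < h5 ∧ 0 < h8 ∧ 0 < h9 ∧
            0 < h10 ∧ 0 < h11 ∧ 0 < h89 ∧ 0 < h510 ∧ 0 < T0)
    (F : (Fin 6 → ℝ) → (Fin 6 → ℝ))
    (hF : ∀ u : Fin 6 → ℝ,
      F u = ![(k2 * u 4 + kb2 * (k510 / h510) * u 4 * u 1) * (1 - u 0 / T0) - h2 * u 0,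
              k5 * u 0 - h5 * u 1,
              k8 * u 0 - h8 * u 2,
              k9 * u 5 - h9 * u 3,
              k10 * u 3 + kb10 * (k89 / h89) * u 3 * u 2 - h10 * u 4,
              k11 * u 0 - h11 * u 5])
    (φ5 φ8 φ9 φ10 φ11 P : ℝ → ℝ)
    (hφ5 : ∀ T, φ5 T = (k5 / h5) * T)
    (hφ8 : ∀ T, φ8 T = (k8 / h8) * T)
    (hφ11 : ∀ T, φ11 T = (k11 / h11) * T)
    (hφ9 : ∀ T, φ9 T = (k9 * k11 / (h9 * h11)) * T)
    (hφ10 : ∀ T, φ10 T = (k9 * k11 / (h10 * h9 * h11)) *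
        (k10 * T + kb10 * (k89 * k8 / (h89 * h8)) * T ^ 2))
    (hP : ∀ T, P T = h2 * T - (k2 + kb2 * (k510 / h510) * φ5 T) * φ10 T * (1 - T / T0)) :
    (∀ u : Fin 6 → ℝ,
      F u = 0 ↔
        (u 1 = φ5 (u 0) ∧ u 2 = φ8 (u 0) ∧ u 3 = φ9 (u 0) ∧ u 4 = φ10 (u 0) ∧
         u 5 = φ11 (u 0) ∧ P (u 0) = 0)) ∧
    Set.BijOn (fun u : Fin 6 → ℝ => u 0) {u | F u = 0} {T | P T = 0} := by
  obtain ⟨-, -, -, -, -, -, -, -, -, -, -, hh5, hh8, hh9, hh10, hh11, -, -, -⟩ := hpos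
  have hstat : ∀ u : Fin 6 → ℝ, F u = 0 ↔
      (u 1 = φ5 (u 0) ∧ u 2 = φ8 (u 0) ∧ u 3 = φ9 (u 0) ∧ u 4 = φ10 (u 0) ∧
       u 5 = φ11 (u 0) ∧ P (u 0) = 0) := by
    intro u
    obtain ⟨T, U5, U8, U9, U10, U11, rfl⟩ :
        ∃ T U5 U8 U9 U10 U11 : ℝ, u = ![T, U5, U8, U9, U10, U11] :=
      ⟨_, _, _, _, _, _, (FinVec.etaExpand_eq u).symm⟩
    simp only [hF, hP, hφ5, hφ8, hφ9, hφ10, hφ11, Matrix.cons_val, Matrix.cons_eq_zero_iff,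
      Matrix.zero_empty, and_true]
    rw [mul_sub_mul_eq_zero_iff_eq_div_mul hh5.ne', mul_sub_mul_eq_zero_iff_eq_div_mul hh8.ne',
      mul_sub_mul_eq_zero_iff_eq_div_mul hh9.ne', sub_mul_eq_zero_iff_eq_div hh10.ne',
      mul_sub_mul_eq_zero_iff_eq_div_mul hh11.ne']
    constructor
    · rintro ⟨hF0, rfl, rfl, rfl, rfl, rfl⟩
      exact ⟨rfl, rfl, by ring, by ring, rfl, by linear_combination -hF0⟩
    · rintro ⟨rfl, rfl, rfl, rfl, rfl, hP0⟩
      exact ⟨by linear_combination -hP0, rfl, rfl, by ring, by ring, rfl⟩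
  refine ⟨hstat, InvOn.bijOn (f' := fun T => ![T, φ5 T, φ8 T, φ9 T, φ10 T, φ11 T])
    ⟨fun u hu => ?_, fun T _ => rfl⟩ (fun u hu => ((hstat u).1 hu).2.2.2.2.2) fun T hT => ?_⟩
  · obtain ⟨hU5, hU8, hU9, hU10, hU11, -⟩ := (hstat u).1 hu
    ext i
    fin_cases i <;> simp [hU5, hU8, hU9, hU10, hU11]
  · exact (hstat _).2 ⟨rfl, rfl, rfl, rfl, rfl, hT⟩
end

section
/- Let F be the reaction vector field of the reduced coagulation model and, for τ ∈ [0,1], let F_τ : ℝ⁶ → ℝ⁶ coincide with F in the components for U₅, U₈, U₉, U₁₀, U₁₁ and have first component F_{τ,1}(u) = (τU₁₀ + (1−τ)φ₁₀(T))·(k₂ + k̄₂(k₅₁₀/h₅₁₀)(τU₅ + (1−τ)φ₅(T)))·(1 − T/T₀) − h₂T. Then for every τ ∈ [0,1], the set of zeros of F_τ equals the set of zeros of F (the two systems have the same stationary points). -/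
/-- The homotopy `F_τ` of the reaction vector field `F` of the reduced
coagulation model has the same zero set (stationary points) as `F`, for every `τ ∈ [0,1]`. -/
theorem stmt_6
    (k2 kb2 k5 k8 k9 k10 kb10 k11 k89 k510
     h2 h5 h8 h9 h10 h11 h89 h510 T0 : ℝ)
    (hpos : 0 < k2 ∧ 0 < kb2 ∧ 0 < k5 ∧ 0 < k8 ∧ 0 < k9 ∧ 0 < k10 ∧ 0 < kb10 ∧
            0 < k11 ∧ 0 < k89 ∧ 0 < k510 ∧ 0 < h2 ∧ 0 < h5 ∧ 0 < h8 ∧ 0 < h9 ∧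
            0 < h10 ∧ 0 < h11 ∧ 0 < h89 ∧ 0 < h510 ∧ 0 < T0)
    (φ5 φ10 : ℝ → ℝ)
    (hφ5 : ∀ T, φ5 T = (k5 / h5) * T)
    (hφ10 : ∀ T, φ10 T = (k9 * k11 / (h10 * h9 * h11)) *
        (k10 * T + kb10 * (k89 * k8 / (h89 * h8)) * T ^ 2))
    (F : (Fin 6 → ℝ) → (Fin 6 → ℝ))
    (hF : ∀ u : Fin 6 → ℝ,
      F u = ![(k2 * u 4 + kb2 * (k510 / h510) * u 4 * u 1) * (1 - u 0 / T0) - h2 * u 0,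
              k5 * u 0 - h5 * u 1,
              k8 * u 0 - h8 * u 2,
              k9 * u 5 - h9 * u 3,
              k10 * u 3 + kb10 * (k89 / h89) * u 3 * u 2 - h10 * u 4,
              k11 * u 0 - h11 * u 5])
    (Fτ : ℝ → (Fin 6 → ℝ) → (Fin 6 → ℝ))
    (hFτ : ∀ (τ : ℝ) (u : Fin 6 → ℝ),
      Fτ τ u = ![(τ * u 4 + (1 - τ) * φ10 (u 0)) *
                   (k2 + kb2 * (k510 / h510) * (τ * u 1 + (1 - τ) * φ5 (u 0))) *
                   (1 - u 0 / T0) - h2 * u 0,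
                 k5 * u 0 - h5 * u 1,
                 k8 * u 0 - h8 * u 2,
                 k9 * u 5 - h9 * u 3,
                 k10 * u 3 + kb10 * (k89 / h89) * u 3 * u 2 - h10 * u 4,
                 k11 * u 0 - h11 * u 5]) :
    ∀ τ ∈ Set.Icc (0 : ℝ) 1, {u : Fin 6 → ℝ | Fτ τ u = 0} = {u : Fin 6 → ℝ | F u = 0} := by
  obtain ⟨hk2, hkb2, hk5, hk8, hk9, hk10, hkb10, hk11, hk89, hk510, hh2, hh5, hh8,
    hh9, hh10, hh11, hh89, hh510, hT0⟩ := hpos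
  intro τ _
  -- Key: whenever the common components 1..5 vanish, `u 1 = φ5 (u 0)` and `u 4 = φ10 (u 0)`.
  have key : ∀ u : Fin 6 → ℝ,
      k5 * u 0 - h5 * u 1 = 0 →
      k8 * u 0 - h8 * u 2 = 0 →
      k9 * u 5 - h9 * u 3 = 0 →
      k10 * u 3 + kb10 * (k89 / h89) * u 3 * u 2 - h10 * u 4 = 0 →
      k11 * u 0 - h11 * u 5 = 0 →
      φ5 (u 0) = u 1 ∧ φ10 (u 0) = u 4 := by
    intro u e1 e2 e3 e4 e5
    have hu1 : u 1 = k5 * u 0 / h5 := by field_simp; linarith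
    have hu2 : u 2 = k8 * u 0 / h8 := by field_simp; linarith
    have hu5 : u 5 = k11 * u 0 / h11 := by field_simp; linarith
    have hu3 : u 3 = k9 * u 5 / h9 := by field_simp; linarith
    have hu4 : u 4 = (k10 * u 3 + kb10 * (k89 / h89) * u 3 * u 2) / h10 := by
      field_simp at e4 ⊢
      linarith
    constructor
    · rw [hφ5, hu1]; field_simp
    · rw [hφ10, hu4, hu3, hu5, hu2]; field_simp
  ext u
  simp only [Set.mem_setOf_eq]
  constructor
  · intro h
    rw [hFτ] at h
    simp only [Matrix.cons_eq_zero_iff] at h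
    obtain ⟨c0, c1, c2, c3, c4, c5, -⟩ := h
    obtain ⟨hA, hB⟩ := key u c1 c2 c3 c4 c5
    rw [hA, hB] at c0
    rw [hF]
    simp only [Matrix.cons_eq_zero_iff]
    exact ⟨by linear_combination c0, c1, c2, c3, c4, c5, Subsingleton.elim _ _⟩
  · intro h
    rw [hF] at h
    simp only [Matrix.cons_eq_zero_iff] at h
    obtain ⟨c0, c1, c2, c3, c4, c5, -⟩ := h
    obtain ⟨hA, hB⟩ := key u c1 c2 c3 c4 c5
    rw [hFτ]
    simp only [Matrix.cons_eq_zero_iff]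
    exact ⟨by rw [hA, hB]; linear_combination c0, c1, c2, c3, c4, c5,
      Subsingleton.elim _ _⟩
end

section
/- Let D > 0, σ ≥ 0, c ∈ ℝ, u* > 0, and let F : ℝ → ℝ be continuous. Suppose u : ℝ → ℝ is twice continuously differentiable, satisfies D u''(x) + c u'(x) + F(u(x)) − σ u(x) = 0 for all x, is monotonically decreasing with u(x) → u* as x → −∞ and u(x) → 0 as x → +∞, u'(x) → 0 as x → ±∞, and u' is square-integrable on ℝ. Then c · ∫_ℝ (u'(x))² dx = ∫₀^{u*} F(s) ds − (σ/2)(u*)². -/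
open Filter MeasureTheory Topology

/-! Multiplying the equation by `u'` shows that the energy
`E = D/2 (u')² + ∫₀^u F - σ/2 u²` satisfies `E' = -c (u')²`. Integrating over `ℝ` and using
`E(-∞) = ∫₀^{u*} F - σ/2 (u*)²` and `E(+∞) = 0` gives the identity. -/

noncomputable def waveEnergy (D σ : ℝ) (F u : ℝ → ℝ) (x : ℝ) : ℝ :=
  D / 2 * deriv u x ^ 2 + (∫ s in (0 : ℝ)..u x, F s) - σ / 2 * u x ^ 2

section WaveEnergy

variable {D σ : ℝ} {F u : ℝ → ℝ}

theorem hasDerivAt_waveEnergy (hF : Continuous F) (hu : Differentiable ℝ u)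
    (hu' : Differentiable ℝ (deriv u)) (x : ℝ) :
    HasDerivAt (waveEnergy D σ F u)
      (deriv u x * (D * deriv (deriv u) x + F (u x) - σ * u x)) x := by
  have hux : HasDerivAt u (deriv u x) x := (hu x).hasDerivAt
  have hu'x : HasDerivAt (deriv u) (deriv (deriv u) x) x := (hu' x).hasDerivAt
  have hprim : HasDerivAt (fun y => ∫ s in (0 : ℝ)..u y, F s) (F (u x) * deriv u x) x :=
    (hF.integral_hasStrictDerivAt 0 (u x)).hasDerivAt.comp x hux
  refine (((hu'x.fun_pow 2).const_mul (D / 2)).add hprim |>.sub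
    ((hux.fun_pow 2).const_mul (σ / 2))).congr_deriv ?_
  push_cast
  ring

theorem tendsto_waveEnergy (hF : Continuous F) {l : Filter ℝ} {a : ℝ}
    (hu : Tendsto u l (𝓝 a)) (hu' : Tendsto (deriv u) l (𝓝 0)) :
    Tendsto (waveEnergy D σ F u) l (𝓝 ((∫ s in (0 : ℝ)..a, F s) - σ / 2 * a ^ 2)) := by
  have hprim : Continuous fun y => ∫ s in (0 : ℝ)..y, F s :=
    intervalIntegral.continuous_primitive hF.intervalIntegrable 0
  have h := ((hu'.pow 2).const_mul (D / 2)).add ((hprim.tendsto a).comp hu)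
    |>.sub ((hu.pow 2).const_mul (σ / 2))
  rwa [zero_pow two_ne_zero, mul_zero, zero_add] at h

end WaveEnergy

theorem stmt_9_general (D σ c ustar : ℝ)
    (F : ℝ → ℝ) (hFcont : Continuous F)
    (u : ℝ → ℝ) (hu : ContDiff ℝ 2 u)
    (heq : ∀ x : ℝ, D * deriv (deriv u) x + c * deriv u x + F (u x) - σ * u x = 0)
    (hbot : Tendsto u atBot (nhds ustar))
    (htop : Tendsto u atTop (nhds 0))
    (hdbot : Tendsto (deriv u) atBot (nhds 0))
    (hdtop : Tendsto (deriv u) atTop (nhds 0))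
    (hint : Integrable (fun x => (deriv u x) ^ 2)) :
    c * (∫ x : ℝ, (deriv u x) ^ 2) =
      (∫ s in (0 : ℝ)..ustar, F s) - σ / 2 * ustar ^ 2 := by
  have hdiff : Differentiable ℝ u := hu.differentiable two_ne_zero
  have hdiff' : Differentiable ℝ (deriv u) :=
    (hu.iterate_deriv' 1 1).differentiable one_ne_zero
  have hderiv : ∀ x, HasDerivAt (waveEnergy D σ F u) (-c * deriv u x ^ 2) x := fun x =>
    (hasDerivAt_waveEnergy hFcont hdiff hdiff' x).congr_deriv
      (by linear_combination deriv u x * heq x)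
  have hFTC := integral_of_hasDerivAt_of_tendsto hderiv (hint.const_mul (-c))
    (tendsto_waveEnergy hFcont hbot hdbot) (tendsto_waveEnergy hFcont htop hdtop)
  rw [integral_const_mul] at hFTC
  simp only [intervalIntegral.integral_same] at hFTC
  linarith

/-- Integrating the traveling-wave equation
`D u'' + c u' + F(u) - σ u = 0` against `u'` over the whole line yields
`c ∫ (u')² = ∫₀^{u*} F(s) ds - (σ/2) (u*)²`. -/
theorem stmt_9 (D σ c ustar : ℝ) (hD : 0 < D) (hσ : 0 ≤ σ) (hustar : 0 < ustar)
    (F : ℝ → ℝ) (hFcont : Continuous F)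
    (u : ℝ → ℝ) (hu : ContDiff ℝ 2 u)
    (heq : ∀ x : ℝ, D * deriv (deriv u) x + c * deriv u x + F (u x) - σ * u x = 0)
    (hmono : Antitone u)
    (hbot : Tendsto u atBot (nhds ustar))
    (htop : Tendsto u atTop (nhds 0))
    (hdbot : Tendsto (deriv u) atBot (nhds 0))
    (hdtop : Tendsto (deriv u) atTop (nhds 0))
    (hint : Integrable (fun x => (deriv u x) ^ 2)) :
    c * (∫ x : ℝ, (deriv u x) ^ 2) =
      (∫ s in (0 : ℝ)..ustar, F s) - σ / 2 * ustar ^ 2 :=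
  stmt_9_general D σ c ustar F hFcont u hu heq hbot htop hdbot hdtop hint
end

section
/- Let D > 0, σ > 0 and A > 0 be real numbers, and set ĉ₁ = (A − 2Dσ)/√(2A). Then ĉ₁ satisfies the narrow-reaction-zone speed equation ĉ₁² + ĉ₁·√(ĉ₁² + 4Dσ) + 2Dσ = A, and ĉ₁ is the unique real solution c of the equation c² + c√(c² + 4Dσ) + 2Dσ = A. -/
/-- `ĉ₁ = (A - 2Dσ)/√(2A)` satisfies the narrow-reaction-zone speed
equation `c² + c √(c² + 4Dσ) + 2Dσ = A`, and it is the unique real solution. -/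
theorem stmt_11 (D σ A : ℝ) (hD : 0 < D) (hσ : 0 < σ) (hA : 0 < A)
    (c1 : ℝ) (hc1 : c1 = (A - 2 * D * σ) / Real.sqrt (2 * A)) :
    c1 ^ 2 + c1 * Real.sqrt (c1 ^ 2 + 4 * D * σ) + 2 * D * σ = A ∧
    ∀ c : ℝ, c ^ 2 + c * Real.sqrt (c ^ 2 + 4 * D * σ) + 2 * D * σ = A → c = c1 := by
  set B := Real.sqrt (2 * A) with hB
  have hBpos : 0 < B := Real.sqrt_pos.mpr (by linarith)
  have hB2 : B ^ 2 = 2 * A := Real.sq_sqrt (by linarith)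
  have hBne : B ≠ 0 := ne_of_gt hBpos
  have hAne : A ≠ 0 := ne_of_gt hA
  have hkey : c1 ^ 2 + 4 * D * σ = ((A + 2 * D * σ) / B) ^ 2 := by
    rw [hc1, div_pow, div_pow, hB2]
    field_simp
    ring
  have hsqrt : Real.sqrt (c1 ^ 2 + 4 * D * σ) = (A + 2 * D * σ) / B := by
    rw [hkey, Real.sqrt_sq (by positivity)]
  have heq : c1 ^ 2 + c1 * Real.sqrt (c1 ^ 2 + 4 * D * σ) + 2 * D * σ = A := by
    rw [hsqrt, hc1, div_mul_div_comm, div_pow, hB2]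
    field_simp
    linear_combination (4 * D ^ 2 * σ ^ 2 - A ^ 2) * hB2
  refine ⟨heq, ?_⟩
  intro c hc
  have hs2 : Real.sqrt (c ^ 2 + 4 * D * σ) ^ 2 = c ^ 2 + 4 * D * σ :=
    Real.sq_sqrt (by positivity)
  set s := Real.sqrt (c ^ 2 + 4 * D * σ) with hs
  have hsnn : 0 ≤ s := Real.sqrt_nonneg _
  have hsc : c + s > 0 := by nlinarith
  have hcs : c * s = A - 2 * D * σ - c ^ 2 := by linarith
  have hsq : 2 * A * c ^ 2 = (A - 2 * D * σ) ^ 2 := by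
    linear_combination (c * s + (A - 2 * D * σ - c ^ 2)) * hcs - c ^ 2 * hs2
  have hc1sq : c ^ 2 = c1 ^ 2 := by
    rw [hc1, div_pow, hB2]
    field_simp
    linarith [hsq]
  have hsign : c * (c + s) = A - 2 * D * σ := by linarith [hcs]
  have hfac : (c - c1) * (c + c1) = 0 := by linear_combination hc1sq
  rcases lt_trichotomy (A - 2 * D * σ) 0 with h | h | h
  · have hcneg : c < 0 := by
      by_contra hcc; push_neg at hcc
      nlinarith [mul_nonneg hcc hsc.le]
    have hc1neg : c1 < 0 := by
      rw [hc1]; exact div_neg_of_neg_of_pos h hBpos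
    rcases mul_eq_zero.mp hfac with h' | h'
    · linarith
    · linarith
  · have hc0 : c = 0 := by
      rcases mul_eq_zero.mp (h ▸ hsign) with h' | h'
      · exact h'
      · linarith
    have : c1 = 0 := by rw [hc1, h]; simp
    rw [hc0, this]
  · have hcpos : 0 < c := by
      by_contra hcc; push_neg at hcc
      nlinarith [mul_nonpos_of_nonpos_of_nonneg hcc hsc.le]
    have hc1pos : 0 < c1 := by
      rw [hc1]; exact div_pos h hBpos
    rcases mul_eq_zero.mp hfac with h' | h'
    · linarith
    · linarith
end

section
/- Let D > 0, α < 0, β < 0, 0 < w₀ < w*, and set w̄ = w₀/(w₀ − w*). Then (w̄ − 1)(αw̄² − βw̄) > 0, and the value c = ĉ₂ := √D·(αw̄² − β)/√((w̄ − 1)(αw̄² − βw̄)) satisfies the C¹-matching condition for the piecewise-linear traveling wave: (w₀ − w*)·(√(c² − 4βD) − c) = w₀·(−√(c² − 4αD) − c). That is, the function w(x) = (w₀ − w*)·exp(x(√(c² − 4βD) − c)/(2D)) + w* for x < 0 and w(x) = w₀·exp(x(−√(c² − 4αD) − c)/(2D)) for x ≥ 0, which solves Dw'' + cw' + β(w −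 w*) = 0 on x < 0 and Dw'' + cw' + αw = 0 on x > 0 and is continuous at 0, has a continuous first derivative at 0. -/
/-!
Write `Q = (w̄ - 1)(αw̄² - βw̄) = (w̄ - 1) w̄ (αw̄ - β)`; since `w̄ < 0` all three factors have
fixed signs and `Q > 0`. For `γ ∈ {α, β}` the discriminant `ĉ₂² - 4γD` is the perfect square
`D (2γw̄ - β - αw̄²)² / Q`, so both exponents are explicit, and they turn out to differ exactly by
the factor `w̄ = w₀ / (w₀ - w*)`: this is the `C¹`-matching condition. Two `C¹` pieces whose
values and derivatives agree at `0` glue to a `C¹` function.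
-/

open Set Topology

section Gluing

variable {E : Type*} [NormedAddCommGroup E] [NormedSpace ℝ E] {f g : ℝ → E} {a : ℝ}

theorem hasDerivAt_ite_lt (hf : Differentiable ℝ f) (hg : Differentiable ℝ g) (h₀ : f a = g a)
    (h₁ : deriv f a = deriv g a) (x : ℝ) :
    HasDerivAt (fun y => if y < a then f y else g y)
      (if x < a then deriv f x else deriv g x) x := by
  rcases lt_trichotomy x a with hx | rfl | hx
  · have hev : (fun y => if y < a then f y else g y) =ᶠ[𝓝 x] f := by
      filter_upwards [Iio_mem_nhds hx] with y hy
      exact if_pos hy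
    rw [if_pos hx, hev.hasDerivAt_iff]
    exact (hf x).hasDerivAt
  · have hleft : HasDerivWithinAt (fun y => if y < x then f y else g y) (deriv g x) (Iic x) x := by
      refine (h₁ ▸ (hf x).hasDerivAt.hasDerivWithinAt).congr (fun y hy => ?_) ?_
      · rcases (mem_Iic.mp hy).lt_or_eq with hy | rfl
        · rw [if_pos hy]
        · rw [if_neg (lt_irrefl y), h₀]
      · rw [if_neg (lt_irrefl x), h₀]
    have hright : HasDerivWithinAt (fun y => if y < x then f y else g y) (deriv g x) (Ici x) x :=
      (hg x).hasDerivAt.hasDerivWithinAt.congr (fun y hy => if_neg (not_lt.mpr hy))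
        (if_neg (lt_irrefl x))
    rw [if_neg (lt_irrefl x)]
    simpa only [Iic_union_Ici, hasDerivWithinAt_univ] using hleft.union hright
  · have hev : (fun y => if y < a then f y else g y) =ᶠ[𝓝 x] g := by
      filter_upwards [Ioi_mem_nhds hx] with y hy
      exact if_neg (not_lt.mpr (le_of_lt hy))
    rw [if_neg (not_lt.mpr hx.le), hev.hasDerivAt_iff]
    exact (hg x).hasDerivAt

theorem contDiff_one_ite_lt (hf : ContDiff ℝ 1 f) (hg : ContDiff ℝ 1 g) (h₀ : f a = g a)
    (h₁ : deriv f a = deriv g a) :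
    ContDiff ℝ 1 (fun y => if y < a then f y else g y) := by
  have hderiv :=
    hasDerivAt_ite_lt (hf.differentiable one_ne_zero) (hg.differentiable one_ne_zero) h₀ h₁
  refine contDiff_one_iff_deriv.mpr ⟨fun x => (hderiv x).differentiableAt, ?_⟩
  have hcont : Continuous fun x => if a ≤ x then deriv g x else deriv f x :=
    (hg.continuous_deriv le_rfl).if_le (hf.continuous_deriv le_rfl) continuous_const
      continuous_id fun x hx => hx ▸ h₁.symm
  convert hcont using 1
  funext x
  simp only [(hderiv x).deriv, ← not_lt, ite_not]

end Gluing

theorem deriv_const_mul_exp_mul_div (A m T : ℝ) :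
    deriv (fun x => A * Real.exp (x * m / T)) 0 = A * (m / T) := by
  have h := (((hasDerivAt_id (0 : ℝ)).mul_const m).div_const T).exp.const_mul A
  simpa using h.deriv

theorem contDiff_one_ite_exp {A W B m₁ m₂ T : ℝ} (h₀ : A + W = B) (h₁ : A * m₁ = B * m₂) :
    ContDiff ℝ 1 fun x =>
      if x < 0 then A * Real.exp (x * m₁ / T) + W else B * Real.exp (x * m₂ / T) := by
  refine contDiff_one_ite_lt (by fun_prop) (by fun_prop) (by simpa using h₀) ?_
  rw [deriv_add_const, deriv_const_mul_exp_mul_div, deriv_const_mul_exp_mul_div, mul_div_assoc',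
    h₁, mul_div_assoc]

section Speed

variable {D α β γ u c : ℝ}

theorem matching_quadratic_pos (hα : α < 0) (hβ : β < 0) (hu : u < 0) :
    0 < (u - 1) * (α * u ^ 2 - β * u) := by
  have : 0 < α * u - β := by nlinarith
  have : 0 < (u - 1) * u := by nlinarith
  nlinarith

theorem sqrt_sq_sub_four_mul_eq (hD : 0 ≤ D) (hQ : 0 < (u - 1) * (α * u ^ 2 - β * u))
    (hc : c = √D * (α * u ^ 2 - β) / √((u - 1) * (α * u ^ 2 - β * u)))
    (hγ : (γ - α) * (γ - β) = 0) (hpos : 0 ≤ 2 * γ * u - β - α * u ^ 2) :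
    √(c ^ 2 - 4 * γ * D) =
      √D * (2 * γ * u - β - α * u ^ 2) / √((u - 1) * (α * u ^ 2 - β * u)) := by
  set Q := (u - 1) * (α * u ^ 2 - β * u) with hQ_def
  -- `(α u² - β)² - 4γQ = (2γu - β - αu²)² - 4u²(γ - α)(γ - β)`
  have hsq : c ^ 2 - 4 * γ * D = D * (2 * γ * u - β - α * u ^ 2) ^ 2 / Q := by
    rw [hc, div_pow, mul_pow, Real.sq_sqrt hD, Real.sq_sqrt hQ.le]
    field_simp
    linear_combination (-4 * γ * D) * hQ_def - 4 * u ^ 2 * D * hγ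
  rw [hsq, Real.sqrt_div' _ hQ.le, Real.sqrt_mul hD, Real.sqrt_sq hpos]

theorem sqrt_sub_eq_mul_neg_sqrt_sub (hD : 0 ≤ D) (hα : α < 0) (hβ : β < 0) (hu : u < 0)
    (hc : c = √D * (α * u ^ 2 - β) / √((u - 1) * (α * u ^ 2 - β * u))) :
    √(c ^ 2 - 4 * β * D) - c = u * (-√(c ^ 2 - 4 * α * D) - c) := by
  have hQ := matching_quadratic_pos hα hβ hu
  -- both sides become `2√D u (β - αu) / √Q`
  rw [sqrt_sq_sub_four_mul_eq hD hQ hc (by ring) (by nlinarith),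
    sqrt_sq_sub_four_mul_eq hD hQ hc (by ring) (by nlinarith), hc]
  ring

end Speed

/-- With `w̄ = w₀/(w₀ - w*)`, the quantity `(w̄ - 1)(αw̄² - βw̄)` is
positive, and the speed `ĉ₂ = √D (αw̄² - β)/√((w̄ - 1)(αw̄² - βw̄))` satisfies the
C¹-matching condition `(w₀ - w*)(√(c² - 4βD) - c) = w₀(-√(c² - 4αD) - c)`; that is, the
piecewise exponential traveling-wave profile is differentiable at `0`. -/
theorem stmt_13 (D α β w0 wstar : ℝ) (hD : 0 < D) (hα : α < 0) (hβ : β < 0)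
    (hw0 : 0 < w0) (hw0' : w0 < wstar)
    (wbar : ℝ) (hwbar : wbar = w0 / (w0 - wstar))
    (c : ℝ)
    (hc : c = Real.sqrt D * (α * wbar ^ 2 - β) /
      Real.sqrt ((wbar - 1) * (α * wbar ^ 2 - β * wbar))) :
    0 < (wbar - 1) * (α * wbar ^ 2 - β * wbar) ∧
    (w0 - wstar) * (Real.sqrt (c ^ 2 - 4 * β * D) - c) =
      w0 * (-Real.sqrt (c ^ 2 - 4 * α * D) - c) ∧
    ∀ w : ℝ → ℝ,
      (∀ x : ℝ, w x =
        if x < 0 then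
          (w0 - wstar) * Real.exp (x * (Real.sqrt (c ^ 2 - 4 * β * D) - c) / (2 * D)) + wstar
        else
          w0 * Real.exp (x * (-Real.sqrt (c ^ 2 - 4 * α * D) - c) / (2 * D))) →
      DifferentiableAt ℝ w 0 ∧ ContinuousAt (deriv w) 0 := by
  have hgap : w0 - wstar < 0 := by linarith
  have hu : wbar < 0 := hwbar ▸ div_neg_of_pos_of_neg hw0 hgap
  have hmatch :
      (w0 - wstar) * (√(c ^ 2 - 4 * β * D) - c) = w0 * (-√(c ^ 2 - 4 * α * D) - c) := by
    rw [sqrt_sub_eq_mul_neg_sqrt_sub hD.le hα hβ hu hc, ← mul_assoc, hwbar,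
      mul_div_cancel₀ _ hgap.ne]
  refine ⟨matching_quadratic_pos hα hβ hu, hmatch, fun w hw => ?_⟩
  obtain rfl := funext hw
  have hC1 := contDiff_one_ite_exp (T := 2 * D) (sub_add_cancel w0 wstar) hmatch
  exact ⟨hC1.differentiable one_ne_zero 0, (hC1.continuous_deriv le_rfl).continuousAt⟩
end
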